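/- The function p ↦ qD(p; Q) is uniformly continuous on (0,1); more precisely, it is continuous on (0,1) and extends to a continuous function on [0,1] with qD(p; Q) → 1 as p → 0⁺ and qD(p; Q) → 0 as p → 1⁻. -/

import Mathlib

open MeasureTheory Filter Set Topology

/-- The (generalized inverse) quantile function of `F`: `Q(p) = inf {t : F t ≥ p}`. -/
noncomputable def quantile (F : ℝ → ℝ) (p : ℝ) : ℝ := sInf {t : ℝ | p ≤ F t}

/-- The quantile D curve `qD(p; Q) = 1 - Q(p/2)/Q(1 - p/2)`. -/
noncomputable def qDcurve (Q : ℝ → ℝ) (p : ℝ) : ℝ := 1 - Q (p / 2) / Q (1 - p / 2)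

/-- The map `p ↦ qD(p; Q)` is uniformly continuous on `(0,1)`: it is continuous on
`(0,1)`, tends to `1` as `p → 0⁺` and to `0` as `p → 1⁻`, and extends to a
continuous function on `[0,1]`. -/
theorem qD_uniformly_continuous
(F : ℝ → ℝ)
    (hFcont : Continuous F)
    (hF0 : ∀ t ≤ 0, F t = 0)
    (hF01 : ∀ t > 0, 0 < F t ∧ F t < 1)
    (hFstrict : StrictMonoOn F (Set.Ioi (0 : ℝ)))
    (hFtop : Filter.Tendsto F Filter.atTop (nhds 1)) :
    UniformContinuousOn (fun p => qDcurve (quantile F) p) (Set.Ioo (0 : ℝ) 1) ∧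
    ContinuousOn (fun p => qDcurve (quantile F) p) (Set.Ioo (0 : ℝ) 1) ∧
    Tendsto (fun p => qDcurve (quantile F) p) (𝓝[>] (0 : ℝ)) (nhds 1) ∧
    Tendsto (fun p => qDcurve (quantile F) p) (𝓝[<] (1 : ℝ)) (nhds 0) ∧
    ∃ g : ℝ → ℝ, ContinuousOn g (Set.Icc (0 : ℝ) 1) ∧
      Set.EqOn g (fun p => qDcurve (quantile F) p) (Set.Ioo (0 : ℝ) 1) := by
  set Q := quantile F with hQdef
  have hF0' : F 0 = 0 := hF0 0 le_rfl
  -- the level sets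
  set S : ℝ → Set ℝ := fun p => {t : ℝ | p ≤ F t} with hSdef
  have hSclosed : ∀ p, IsClosed (S p) := fun p =>
    isClosed_le continuous_const hFcont
  have hSne : ∀ p < 1, (S p).Nonempty := by
    intro p hp
    obtain ⟨t, ht⟩ := (hFtop.eventually (eventually_gt_nhds hp)).exists
    exact ⟨t, le_of_lt ht⟩
  have hSbdd : ∀ p, 0 < p → BddBelow (S p) := by
    intro p hp
    refine ⟨0, fun t ht => ?_⟩
    by_contra h
    push_neg at h
    have := hF0 t h.le
    simp only [hSdef, mem_setOf_eq] at ht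
    linarith
  -- lower bounds for S p
  have hSlb : ∀ p a, 0 < a → F a < p → a ∈ lowerBounds (S p) := by
    intro p a ha hFa t ht
    simp only [hSdef, mem_setOf_eq] at ht
    by_contra h
    push_neg at h
    rcases le_or_gt t 0 with h0 | h0
    · have := hF0 t h0
      have := (hF01 a ha).1
      linarith
    · have := hFstrict (mem_Ioi.mpr h0) (mem_Ioi.mpr ha) h
      linarith
  -- membership of the infimum
  have hQmem : ∀ p, 0 < p → p < 1 → p ≤ F (Q p) :=
    fun p hp hp1 => (hSclosed p).csInf_mem (hSne p hp1) (hSbdd p hp)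
  -- positivity of Q
  have hQpos : ∀ p, 0 < p → p < 1 → 0 < Q p := by
    intro p hp hp1
    have h : ∀ᶠ t in 𝓝 (0 : ℝ), F t < p := by
      have := hFcont.continuousAt (x := (0 : ℝ))
      rw [ContinuousAt, hF0'] at this
      exact this (eventually_lt_nhds hp)
    obtain ⟨δ, hδ, hδ'⟩ := Metric.eventually_nhds_iff.mp h
    have hlb : (δ / 2) ∈ lowerBounds (S p) := by
      intro t ht
      simp only [hSdef, mem_setOf_eq] at ht
      by_contra h'
      push_neg at h'
      rcases le_or_gt t 0 with h0 | h0
      · have := hF0 t h0; linarith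
      · have : dist t 0 < δ := by
          rw [Real.dist_eq, sub_zero, abs_of_pos h0]; linarith
        have := hδ' this
        linarith
    have := le_csInf (hSne p hp1) hlb
    have : δ / 2 ≤ Q p := this
    linarith
  -- upper/lower estimates for Q
  have hQle : ∀ p b, 0 < p → p ≤ F b → Q p ≤ b := by
    intro p b hp hb
    exact csInf_le (hSbdd p hp) hb
  have hQge : ∀ p a, 0 < a → F a < p → p < 1 → a ≤ Q p := by
    intro p a ha hFa hp1
    exact le_csInf (hSne p hp1) (hSlb p a ha hFa)
  -- continuity of Q on (0,1)
  have hQca : ∀ p₀ ∈ Ioo (0 : ℝ) 1, ContinuousAt Q p₀ := by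
    rintro p₀ ⟨hp₀, hp₀1⟩
    rw [Metric.continuousAt_iff]
    intro ε hε
    set x₀ := Q p₀ with hx₀def
    have hx₀ : 0 < x₀ := hQpos p₀ hp₀ hp₀1
    set a := max (x₀ - ε / 2) (x₀ / 2) with hadef
    set b := x₀ + ε / 2 with hbdef
    have ha0 : 0 < a := lt_max_of_lt_right (by linarith)
    have hax : a < x₀ := max_lt (by linarith) (by linarith)
    have hxb : x₀ < b := by simp [hbdef]; linarith
    have hFa : F a < p₀ := by
      by_contra h
      push_neg at h
      have := hQle p₀ a hp₀ h
      rw [← hx₀def] at this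
      linarith
    have hFb : p₀ < F b := by
      have h1 : p₀ ≤ F x₀ := hQmem p₀ hp₀ hp₀1
      have h2 : F x₀ < F b := hFstrict (mem_Ioi.mpr hx₀) (mem_Ioi.mpr (by linarith)) hxb
      linarith
    have hFa0 : 0 < F a := (hF01 a ha0).1
    have hFb1 : F b < 1 := (hF01 b (by linarith)).2
    refine ⟨min (p₀ - F a) (F b - p₀), lt_min (by linarith) (by linarith), fun {p} hp => ?_⟩
    rw [Real.dist_eq] at hp
    have h1 : F a < p := by
      have := abs_lt.mp (lt_of_lt_of_le hp (min_le_left _ _))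
      linarith
    have h2 : p < F b := by
      have := abs_lt.mp (lt_of_lt_of_le hp (min_le_right _ _))
      linarith
    have hple : Q p ≤ x₀ + ε / 2 := hQle p (x₀ + ε / 2) (by linarith) h2.le
    have hpge : a ≤ Q p := hQge p a ha0 h1 (by linarith)
    have hpge' : x₀ - ε / 2 ≤ Q p := le_trans (le_max_left _ _) hpge
    rw [Real.dist_eq, abs_lt]
    constructor <;> linarith
  -- Q tends to 0 from the right of 0
  have hQ0 : Tendsto Q (𝓝[>] (0 : ℝ)) (𝓝 0) := by
    rw [Metric.tendsto_nhdsWithin_nhds]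
    intro ε hε
    have hFε : 0 < F (ε / 2) := (hF01 _ (by linarith)).1
    have hFε1 : F (ε / 2) < 1 := (hF01 _ (by linarith)).2
    refine ⟨F (ε / 2), hFε, fun {p} hp hd => ?_⟩
    rw [Real.dist_eq, sub_zero, abs_of_pos hp] at hd
    have hp1 : p < 1 := by linarith
    have h1 : Q p ≤ ε / 2 := hQle p (ε / 2) hp (by linarith)
    have hp0 : 0 < p := hp
    have h2 : 0 ≤ Q p := le_csInf (hSne p hp1) (by
      intro t ht
      simp only [hSdef, mem_setOf_eq] at ht
      by_contra h
      push_neg at h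
      have := hF0 t h.le
      linarith)
    rw [Real.dist_eq, sub_zero, abs_of_nonneg h2]
    linarith
  -- Q tends to ∞ from the left of 1
  have hQtop : Tendsto Q (𝓝[<] (1 : ℝ)) atTop := by
    rw [tendsto_atTop]
    intro M
    set M' := max M 1 with hM'def
    have hM'0 : (0 : ℝ) < M' := lt_max_of_lt_right one_pos
    have hFM' : F M' < 1 := (hF01 M' hM'0).2
    have hFM'0 : 0 < F M' := (hF01 M' hM'0).1
    filter_upwards [Ioo_mem_nhdsLT_of_mem (by constructor <;> [exact hFM'; exact le_rfl] :
      (1 : ℝ) ∈ Ioc (F M') 1)] with p hp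
    have h := hQge p M' hM'0 hp.1 hp.2
    exact le_trans (le_max_left M 1) h
  -- the qD function
  set f : ℝ → ℝ := fun p => qDcurve Q p with hfdef
  -- continuity of f on (0,1)
  have hfca : ∀ p ∈ Ioo (0 : ℝ) 1, ContinuousAt f p := by
    rintro p ⟨hp, hp1⟩
    have h1 : p / 2 ∈ Ioo (0 : ℝ) 1 := ⟨by linarith, by linarith⟩
    have h2 : 1 - p / 2 ∈ Ioo (0 : ℝ) 1 := ⟨by linarith, by linarith⟩
    have c1 : ContinuousAt (fun q : ℝ => Q (q / 2)) p :=
      ContinuousAt.comp (f := fun q : ℝ => q / 2) (hQca _ h1) (continuousAt_id.div_const 2)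
    have c2 : ContinuousAt (fun q : ℝ => Q (1 - q / 2)) p :=
      ContinuousAt.comp (f := fun q : ℝ => 1 - q / 2) (hQca _ h2)
        (continuousAt_const.sub (continuousAt_id.div_const 2))
    have hne : Q (1 - p / 2) ≠ 0 := ne_of_gt (hQpos _ h2.1 h2.2)
    exact continuousAt_const.sub (c1.div c2 hne)
  have hfcont : ContinuousOn f (Ioo (0 : ℝ) 1) :=
    fun p hp => (hfca p hp).continuousWithinAt
  -- limit at 0⁺
  have hhalf : Tendsto (fun p : ℝ => p / 2) (𝓝[>] (0 : ℝ)) (𝓝[>] (0 : ℝ)) := by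
    apply tendsto_nhdsWithin_of_tendsto_nhds_of_eventually_within
    · have : Tendsto (fun p : ℝ => p / 2) (𝓝 (0 : ℝ)) (𝓝 (0 / 2)) :=
        (continuous_id.div_const 2).tendsto 0
      simpa using this.mono_left nhdsWithin_le_nhds
    · filter_upwards [self_mem_nhdsWithin] with p hp
      exact mem_Ioi.mpr (by simpa using half_pos (mem_Ioi.mp hp))
  have hcompl : Tendsto (fun p : ℝ => 1 - p / 2) (𝓝[>] (0 : ℝ)) (𝓝[<] (1 : ℝ)) := by
    apply tendsto_nhdsWithin_of_tendsto_nhds_of_eventually_within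
    · have : Tendsto (fun p : ℝ => 1 - p / 2) (𝓝 (0 : ℝ)) (𝓝 (1 - 0 / 2)) :=
        (continuous_const.sub (continuous_id.div_const 2)).tendsto 0
      simpa using this.mono_left nhdsWithin_le_nhds
    · filter_upwards [self_mem_nhdsWithin] with p hp
      have := mem_Ioi.mp hp
      exact mem_Iio.mpr (by linarith)
  have hf0 : Tendsto f (𝓝[>] (0 : ℝ)) (𝓝 1) := by
    have hnum : Tendsto (fun p : ℝ => Q (p / 2)) (𝓝[>] (0 : ℝ)) (𝓝 0) :=
      hQ0.comp hhalf
    have hden : Tendsto (fun p : ℝ => Q (1 - p / 2)) (𝓝[>] (0 : ℝ)) atTop :=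
      hQtop.comp hcompl
    have hdiv : Tendsto (fun p : ℝ => Q (p / 2) / Q (1 - p / 2)) (𝓝[>] (0 : ℝ)) (𝓝 0) :=
      hnum.div_atTop hden
    have := tendsto_const_nhds (α := ℝ) (x := (1 : ℝ)) (f := 𝓝[>] (0:ℝ)) |>.sub hdiv
    simpa [hfdef, qDcurve] using this
  -- limit at 1⁻
  have hf1 : Tendsto f (𝓝[<] (1 : ℝ)) (𝓝 0) := by
    have hhalf' : Tendsto (fun p : ℝ => p / 2) (𝓝[<] (1 : ℝ)) (𝓝 (1 / 2 : ℝ)) := by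
      have : Tendsto (fun p : ℝ => p / 2) (𝓝 (1 : ℝ)) (𝓝 (1 / 2 : ℝ)) := by
        have := (continuous_id.div_const 2).tendsto (1 : ℝ)
        simpa using this
      exact this.mono_left nhdsWithin_le_nhds
    have hcompl' : Tendsto (fun p : ℝ => 1 - p / 2) (𝓝[<] (1 : ℝ)) (𝓝 (1 / 2 : ℝ)) := by
      have : Tendsto (fun p : ℝ => 1 - p / 2) (𝓝 (1 : ℝ)) (𝓝 (1 - 1 / 2 : ℝ)) :=
        (continuous_const.sub (continuous_id.div_const 2)).tendsto (1 : ℝ)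
      have h : (1 : ℝ) - 1 / 2 = 1 / 2 := by norm_num
      rw [h] at this
      exact this.mono_left nhdsWithin_le_nhds
    have hhalfmem : (1 / 2 : ℝ) ∈ Ioo (0 : ℝ) 1 := by norm_num
    have hQhalf : (0 : ℝ) < Q (1 / 2) := hQpos _ hhalfmem.1 hhalfmem.2
    have hnum : Tendsto (fun p : ℝ => Q (p / 2)) (𝓝[<] (1 : ℝ)) (𝓝 (Q (1 / 2))) :=
      (hQca _ hhalfmem).tendsto.comp hhalf'
    have hden : Tendsto (fun p : ℝ => Q (1 - p / 2)) (𝓝[<] (1 : ℝ)) (𝓝 (Q (1 / 2))) :=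
      (hQca _ hhalfmem).tendsto.comp hcompl'
    have hdiv : Tendsto (fun p : ℝ => Q (p / 2) / Q (1 - p / 2)) (𝓝[<] (1 : ℝ))
        (𝓝 (Q (1 / 2) / Q (1 / 2))) := hnum.div hden (ne_of_gt hQhalf)
    rw [div_self (ne_of_gt hQhalf)] at hdiv
    have := tendsto_const_nhds (α := ℝ) (x := (1 : ℝ)) (f := 𝓝[<] (1:ℝ)) |>.sub hdiv
    simpa [hfdef, qDcurve] using this
  -- the continuous extension
  set g : ℝ → ℝ := extendFrom (Ioo (0 : ℝ) 1) f with hgdef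
  have hgcont : ContinuousOn g (Icc (0 : ℝ) 1) :=
    continuousOn_Icc_extendFrom_Ioo hfcont hf0 hf1
  have hgeq : Set.EqOn g f (Ioo (0 : ℝ) 1) := fun x hx => extendFrom_extends hfcont x hx
  -- uniform continuity
  have hgUC : UniformContinuousOn g (Icc (0 : ℝ) 1) :=
    isCompact_Icc.uniformContinuousOn_of_continuous hgcont
  have hgUC' : UniformContinuousOn g (Ioo (0 : ℝ) 1) := by
    unfold UniformContinuousOn at hgUC ⊢
    exact hgUC.mono_left (inf_le_inf_left _ (principal_mono.mpr
      (Set.prod_mono Ioo_subset_Icc_self Ioo_subset_Icc_self)))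
  have hfUC : UniformContinuousOn f (Ioo (0 : ℝ) 1) := by
    unfold UniformContinuousOn at hgUC' ⊢
    refine hgUC'.congr' ?_
    rw [eventuallyEq_inf_principal_iff]
    filter_upwards with x hx
    rcases mem_prod.mp hx with ⟨h1, h2⟩
    simp [hgeq h1, hgeq h2]
  exact ⟨hfUC, hfcont, hf0, hf1, g, hgcont, hgeq⟩
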